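/- Let S be a supercharacter theory of a finite group G and define V_i(S) as V_1(S) = V(S), V_i(S) = [V_{i-1}(S), S]. Then G is S-nilpotent if and only if the descending series V_i(S) terminates at the trivial subgroup. -/

import Mathlib

open scoped BigOperators Pointwise

/-- `f : G → ℂ` is an irreducible character of `G`. -/
def IsIrrChar (G : Type) [Group G] [Fintype G] (f : G → ℂ) : Prop :=
  ∃ V : FDRep ℂ G, CategoryTheory.Simple V ∧ V.character = f

/-- A supercharacter theory of a finite group `G` (Diaconis–Isaacs): a partition
`parts` of the set of irreducible characters of `G` together with a partition of `G`
into `S`-classes (`cls g` is the class of `g`), such that `{1}` is a class, the number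
of parts equals the number of classes, and each supercharacter
`σ_X = ∑ χ ∈ X, χ(1)·χ` is constant on every class. -/
structure SCT (G : Type) [Group G] [Fintype G] where
  parts : Finset (Finset (G → ℂ))
  cls : G → Set G
  parts_cover : ∀ f : G → ℂ, IsIrrChar G f ↔ ∃ X ∈ parts, f ∈ X
  parts_disj : ∀ X ∈ parts, ∀ Y ∈ parts, X ≠ Y → Disjoint X Y
  parts_nonempty : ∀ X ∈ parts, X.Nonempty
  mem_cls : ∀ g : G, g ∈ cls g
  cls_eq : ∀ g h : G, h ∈ cls g → cls h = cls g
  cls_one : cls (1 : G) = {1}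
  card_eq : parts.card = Nat.card (Set.range cls)
  const : ∀ X ∈ parts, ∀ g h : G, h ∈ cls g →
    (∑ χ ∈ X, χ 1 * χ h) = (∑ χ ∈ X, χ 1 * χ g)

variable {G : Type} [Group G] [Fintype G]

namespace SCT

/-- The supercharacter attached to a part `X`. -/
noncomputable def superchar (_S : SCT G) (X : Finset (G → ℂ)) : G → ℂ := fun g => ∑ χ ∈ X, χ 1 * χ g

/-- The set `Irr(S)` of `S`-characters. -/
def Irr (S : SCT G) : Set (G → ℂ) := {f | ∃ X ∈ S.parts, f = S.superchar X}

end SCT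

/-- The kernel of a character-like function `f : G → ℂ`. -/
def charKer (f : G → ℂ) : Subgroup G where
  carrier := {g | ∀ h, f (g * h) = f h}
  one_mem' := by intro h; simp
  mul_mem' := by intro a b ha hb h; rw [mul_assoc, ha, hb]
  inv_mem' := by
    intro a ha h
    have := ha (a⁻¹ * h)
    rw [mul_inv_cancel_left] at this
    exact this.symm

namespace SCT

/-- `[H,S]`, the subgroup generated by the `g⁻¹k` with `g ∈ H`, `k ∈ Cl_S(g)`. -/
def comm (S : SCT G) (H : Subgroup G) : Subgroup G :=
  Subgroup.closure {x | ∃ g ∈ H, ∃ k ∈ S.cls g, x = g⁻¹ * k}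

/-- `[G,S]`. -/
def derived (S : SCT G) : Subgroup G := S.comm ⊤

/-- `Irr(S | N)`: the `S`-characters whose kernel does not contain `N`. -/
def IrrRel (S : SCT G) (N : Subgroup G) : Set (G → ℂ) :=
  {f | f ∈ S.Irr ∧ ¬ N ≤ charKer f}

/-- `g` is an `S`-Camina element: all of `Irr(S | [G,S])` vanishes at `g`. -/
def IsCaminaElt (S : SCT G) (g : G) : Prop :=
  ∀ f ∈ S.IrrRel S.derived, f g = 0

/-- `N` is `S`-normal: a union of `S`-classes. -/
def IsNormal (S : SCT G) (N : Subgroup G) : Prop :=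
  ∀ g ∈ N, S.cls g ⊆ N

/-- `(G,N)` is a generalised `S`-Camina pair. -/
def IsGCP (S : SCT G) (N : Subgroup G) : Prop :=
  S.IsNormal N ∧ ∀ g : G, g ∉ N → S.IsCaminaElt g

/-- The set `Z(S)` of elements with singleton `S`-class. -/
def centerSet (S : SCT G) : Set G := {g | S.cls g = {g}}

/-- The vanishing-off subgroup `V(S | N)`. -/
def V (S : SCT G) (N : Subgroup G) : Subgroup G :=
  Subgroup.closure {g | ∃ f ∈ S.IrrRel N, f g ≠ 0}

/-- `V(S) = V(S | [G,S])`. -/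
def VS (S : SCT G) : Subgroup G := S.V S.derived

/-- `U(S | N)`: the product of all `S`-normal subgroups `H` with `V(S | H) ≤ N`. -/
def U (S : SCT G) (N : Subgroup G) : Subgroup G :=
  ⨆ (H : Subgroup G) (_ : S.IsNormal H ∧ S.V H ≤ N), H

/-- The upper `S`-central series: `ζ_0 = 1` and `ζ_{i+1}/ζ_i = Z(S^{G/ζ_i})`,
i.e. `ζ_{i+1}` consists of the `g` whose `S`-class maps onto the single coset `gζ_i`. -/
def zeta (S : SCT G) : ℕ → Subgroup G
  | 0 => ⊥
  | i + 1 => Subgroup.closure {g | ∀ k ∈ S.cls g, g⁻¹ * k ∈ S.zeta i}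

/-- The lower `S`-central series `γ_1 = G`, `γ_{i+1} = [γ_i, S]` (with `γ_0 := G`). -/
def gamma (S : SCT G) : ℕ → Subgroup G
  | 0 => ⊤
  | 1 => ⊤
  | n + 2 => S.comm (S.gamma (n + 1))

/-- The series `V_1(S) = V(S)`, `V_{i+1}(S) = [V_i(S), S]` (with `V_0 := V(S)`). -/
def Vseq (S : SCT G) : ℕ → Subgroup G
  | 0 => S.VS
  | 1 => S.VS
  | n + 2 => S.comm (S.Vseq (n + 1))

/-- `G` is a `VZ(S)`-group: every member of `Irr(S | [G,S])` vanishes off `Z(S)`. -/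
def IsVZ (S : SCT G) : Prop :=
  ∀ f ∈ S.IrrRel S.derived, ∀ g : G, g ∉ S.centerSet → f g = 0

end SCT

/-!
For `x = g⁻¹k` with `k ∈ Cl_S(g)`, every `S`-character whose kernel contains `[G,S]` takes its
degree at `x`. If also all of `Irr(S | [G,S])` vanished at `x`, then `∑_X σ_X(x)` would be a sum
of nonnegative degrees, one of them positive since the supercharacters have no common zero; but
this sum is `|G|·δ₁(x)`, so `x = 1`. Both facts hold because the supercharacters are orthogonal
and as many as the `S`-classes, hence a basis of the `S`-class functions. Thus `[G,S] ≤ V(S)`,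
and monotonicity of `H ↦ [H,S]` gives `γ_{i+1}(S) ≤ V_i(S) ≤ γ_i(S)`.
-/

open scoped ComplexOrder

variable (G) in
noncomputable def charPairing : LinearMap.BilinForm ℂ (G → ℂ) :=
  LinearMap.mk₂ ℂ (fun f₁ f₂ => ∑ g, f₁ g * f₂ g⁻¹)
    (fun _ _ _ => by simp only [Pi.add_apply, add_mul, Finset.sum_add_distrib])
    (fun _ _ _ => by simp only [Pi.smul_apply, smul_eq_mul, mul_assoc, Finset.mul_sum])
    (fun _ _ _ => by simp only [Pi.add_apply, mul_add, Finset.sum_add_distrib])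
    (fun _ _ _ => by simp only [Pi.smul_apply, smul_eq_mul, mul_left_comm, Finset.mul_sum])

theorem charPairing_apply (f₁ f₂ : G → ℂ) : charPairing G f₁ f₂ = ∑ g, f₁ g * f₂ g⁻¹ := rfl

theorem charPairing_single_one [DecidableEq G] (f : G → ℂ) :
    charPairing G (Pi.single 1 1) f = f 1 := by
  simp [charPairing_apply, Pi.single_apply]

namespace IsIrrChar

theorem charPairing_eq {f₁ f₂ : G → ℂ} (h₁ : IsIrrChar G f₁) (h₂ : IsIrrChar G f₂) :
    charPairing G f₁ f₂ = if f₁ = f₂ then (Fintype.card G : ℂ) else 0 := by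
  classical
  have hcard : (Fintype.card G : ℂ) ≠ 0 := Nat.cast_ne_zero.2 Fintype.card_ne_zero
  have orth (V W : FDRep ℂ G) [CategoryTheory.Simple V] [CategoryTheory.Simple W] :
      charPairing G V.character W.character =
        if Nonempty (V ≅ W) then (Fintype.card G : ℂ) else 0 := by
    have : Invertible (Nat.card G : ℂ) :=
      invertibleOfNonzero (by rwa [Nat.card_eq_fintype_card])
    have h := FDRep.char_orthonormal V W
    rw [Nat.card_eq_fintype_card, inv_mul_eq_iff_eq_mul₀ hcard] at h
    rw [charPairing_apply, h]
    split_ifs <;> simp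
  obtain ⟨V, hV, rfl⟩ := h₁
  obtain ⟨W, hW, rfl⟩ := h₂
  rw [orth V W]
  by_cases hiso : Nonempty (V ≅ W)
  · rw [if_pos hiso, if_pos (FDRep.char_iso hiso.some)]
  · rw [if_neg hiso, if_neg]
    intro hchar
    have hVW := orth V W
    rw [if_neg hiso, ← hchar, orth V V, if_pos ⟨CategoryTheory.Iso.refl V⟩] at hVW
    exact hcard hVW

theorem exists_apply_one_eq_natCast_pos {f : G → ℂ} (h : IsIrrChar G f) :
    ∃ d : ℕ, 0 < d ∧ f 1 = d := by
  obtain ⟨V, hV, rfl⟩ := h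
  refine ⟨Module.finrank ℂ V, Nat.pos_of_ne_zero fun h0 => ?_, FDRep.char_one V⟩
  have : Subsingleton V := Module.finrank_zero_iff.1 h0
  refine CategoryTheory.id_nonzero V ?_
  ext x
  exact Subsingleton.elim _ _

end IsIrrChar

namespace SCT

variable (S : SCT G)

theorem isIrrChar_of_mem {X : Finset (G → ℂ)} (hX : X ∈ S.parts) {χ : G → ℂ} (hχ : χ ∈ X) :
    IsIrrChar G χ :=
  (S.parts_cover χ).2 ⟨X, hX, hχ⟩

theorem superchar_eq_sum (X : Finset (G → ℂ)) : S.superchar X = ∑ χ ∈ X, χ 1 • χ := by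
  ext g
  simp [superchar, Finset.sum_apply]

theorem superchar_one_pos {X : Finset (G → ℂ)} (hX : X ∈ S.parts) : 0 < S.superchar X 1 := by
  refine Finset.sum_pos (fun χ hχ => ?_) (S.parts_nonempty X hX)
  obtain ⟨d, hd, hχ1⟩ := (S.isIrrChar_of_mem hX hχ).exists_apply_one_eq_natCast_pos
  rw [hχ1]
  exact mul_pos (Nat.cast_pos.2 hd) (Nat.cast_pos.2 hd)

theorem charPairing_superchar {X Y : Finset (G → ℂ)} (hX : X ∈ S.parts) (hY : Y ∈ S.parts) :
    charPairing G (S.superchar X) (S.superchar Y) =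
      if X = Y then (Fintype.card G : ℂ) * S.superchar X 1 else 0 := by
  have hexpand : charPairing G (S.superchar X) (S.superchar Y) =
      ∑ χ ∈ X, ∑ ψ ∈ Y, χ 1 * ψ 1 * charPairing G χ ψ := by
    simp only [superchar_eq_sum, map_sum, map_smul, LinearMap.sum_apply, LinearMap.smul_apply,
      smul_eq_mul, Finset.mul_sum]
    rw [Finset.sum_comm]
    exact Finset.sum_congr rfl fun χ _ => Finset.sum_congr rfl fun ψ _ => by ring
  have orth : ∀ χ ∈ X, ∀ ψ ∈ Y, charPairing G χ ψ = if χ = ψ then (Fintype.card G : ℂ) else 0 :=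
    fun χ hχ ψ hψ => (S.isIrrChar_of_mem hX hχ).charPairing_eq (S.isIrrChar_of_mem hY hψ)
  rw [hexpand]
  split_ifs with hXY
  · subst hXY
    rw [superchar, Finset.mul_sum]
    refine Finset.sum_congr rfl fun χ hχ => ?_
    rw [Finset.sum_eq_single_of_mem χ hχ fun ψ hψ hne => by
      rw [orth χ hχ ψ hψ, if_neg hne.symm, mul_zero], orth χ hχ χ hχ, if_pos rfl]
    ring
  · refine Finset.sum_eq_zero fun χ hχ => Finset.sum_eq_zero fun ψ hψ => ?_
    have hne : χ ≠ ψ := fun h =>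
      Finset.disjoint_left.1 (S.parts_disj X hX Y hY hXY) hχ (h ▸ hψ)
    rw [orth χ hχ ψ hψ, if_neg hne, mul_zero]

def classFunctions : Submodule ℂ (G → ℂ) where
  carrier := {f | ∀ g, ∀ h ∈ S.cls g, f h = f g}
  add_mem' hf₁ hf₂ g h hh := by simp only [Pi.add_apply, hf₁ g h hh, hf₂ g h hh]
  zero_mem' _ _ _ := rfl
  smul_mem' c f hf g h hh := by simp only [Pi.smul_apply, hf g h hh]

theorem superchar_mem_classFunctions {X : Finset (G → ℂ)} (hX : X ∈ S.parts) :
    S.superchar X ∈ S.classFunctions :=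
  S.const X hX

theorem finrank_classFunctions_le : Module.finrank ℂ S.classFunctions ≤ S.parts.card := by
  classical
  let rep : Set.range S.cls → G := fun C => C.2.choose
  have hinj : Function.Injective ((LinearMap.funLeft ℂ ℂ rep).domRestrict S.classFunctions) := by
    rintro ⟨f₁, hf₁⟩ ⟨f₂, hf₂⟩ heq
    ext g
    let C : Set.range S.cls := ⟨S.cls g, g, rfl⟩
    have hg : g ∈ S.cls (rep C) := C.2.choose_spec ▸ S.mem_cls g
    show f₁ g = f₂ g
    rw [hf₁ _ g hg, hf₂ _ g hg]
    exact congr_fun heq C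
  rw [S.card_eq, Nat.card_eq_fintype_card, ← Module.finrank_fintype_fun_eq_card ℂ]
  exact LinearMap.finrank_le_finrank_of_injective hinj

theorem linearIndependent_superchar :
    LinearIndependent ℂ fun X : S.parts => S.superchar X := by
  refine LinearMap.linearIndependent_of_isOrthoᵢ (B := charPairing G)
    (LinearMap.isOrthoᵢ_def.2 fun X Y hXY => ?_)
    fun X => ?_
  · rw [S.charPairing_superchar X.2 Y.2, if_neg (Subtype.coe_ne_coe.2 hXY)]
  · rw [S.charPairing_superchar X.2 X.2, if_pos rfl]
    exact mul_ne_zero (Nat.cast_ne_zero.2 Fintype.card_ne_zero) (S.superchar_one_pos X.2).ne'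

theorem span_superchar :
    Submodule.span ℂ (Set.range fun X : S.parts => S.superchar X) = S.classFunctions := by
  refine Submodule.eq_of_le_of_finrank_le ?_ ?_
  · exact Submodule.span_le.2 (Set.range_subset_iff.2 fun X => S.superchar_mem_classFunctions X.2)
  · rw [finrank_span_eq_card S.linearIndependent_superchar, Fintype.card_coe]
    exact S.finrank_classFunctions_le

theorem exists_sum_smul_superchar {f : G → ℂ} (hf : f ∈ S.classFunctions) :
    ∃ c : S.parts → ℂ, ∑ X, c X • S.superchar X = f := by
  rwa [← S.span_superchar, Submodule.mem_span_range_iff_exists_fun] at hf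

theorem eq_one_iff_of_mem_cls {g h : G} (hh : h ∈ S.cls g) : h = 1 ↔ g = 1 := by
  constructor
  · rintro rfl
    have hg := S.mem_cls g
    rwa [← S.cls_eq g 1 hh, S.cls_one] at hg
  · rintro rfl
    rwa [S.cls_one] at hh

theorem charPairing_sum_smul_superchar (c : S.parts → ℂ) (Y : S.parts) :
    charPairing G (∑ X, c X • S.superchar X) (S.superchar Y) =
      c Y * ((Fintype.card G : ℂ) * S.superchar Y 1) := by
  simp only [map_sum, map_smul, LinearMap.sum_apply, LinearMap.smul_apply, smul_eq_mul]
  rw [Finset.sum_eq_single Y (fun X _ hXY => by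
      rw [S.charPairing_superchar X.2 Y.2, if_neg (Subtype.coe_ne_coe.2 hXY), mul_zero])
    (by simp), S.charPairing_superchar Y.2 Y.2, if_pos rfl]

theorem sum_superchar_eq_zero {x : G} (hx : x ≠ 1) : ∑ X : S.parts, S.superchar X x = 0 := by
  classical
  have hδ : Pi.single (1 : G) (1 : ℂ) ∈ S.classFunctions := fun g h hh => by
    simp [Pi.single_apply, S.eq_one_iff_of_mem_cls hh]
  obtain ⟨c, hc⟩ := S.exists_sum_smul_superchar hδ
  -- orthogonality reads off the coefficients of `δ₁`: `|G| • δ₁ = ∑ X, σ_X`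
  have hcoeff (Y : S.parts) : c Y = (Fintype.card G : ℂ)⁻¹ := by
    have h := S.charPairing_sum_smul_superchar c Y
    rw [hc, charPairing_single_one] at h
    exact eq_inv_of_mul_eq_one_left
      (mul_right_cancel₀ (S.superchar_one_pos Y.2).ne' (by linear_combination -h))
  have hcx := congr_fun hc x
  simp only [Finset.sum_apply, Pi.smul_apply, smul_eq_mul, hcoeff, ← Finset.mul_sum,
    Pi.single_eq_of_ne hx] at hcx
  simpa using hcx

theorem exists_superchar_ne_zero (x : G) : ∃ X ∈ S.parts, S.superchar X x ≠ 0 := by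
  obtain ⟨c, hc⟩ := S.exists_sum_smul_superchar (f := 1) fun _ _ _ => rfl
  by_contra! hzero
  have hcx := congr_fun hc x
  simp [Finset.sum_apply, hzero] at hcx

theorem eq_one_of_forall_superchar_eq_zero_or_eq {x : G}
    (hx : ∀ X : S.parts, S.superchar X x = 0 ∨ S.superchar X x = S.superchar X 1) : x = 1 := by
  by_contra hx1
  obtain ⟨X₀, hX₀, hne⟩ := S.exists_superchar_ne_zero x
  have hnonneg (X : S.parts) : 0 ≤ S.superchar X x :=
    (hx X).elim (fun h => h.ge) fun h => h ▸ (S.superchar_one_pos X.2).le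
  have hpos : 0 < S.superchar X₀ x :=
    ((hx ⟨X₀, hX₀⟩).resolve_left hne) ▸ S.superchar_one_pos hX₀
  exact (Finset.sum_pos' (fun X _ => hnonneg X) ⟨⟨X₀, hX₀⟩, Finset.mem_univ _, hpos⟩).ne'
    (S.sum_superchar_eq_zero hx1)

theorem derived_le_VS : S.derived ≤ S.VS := by
  rw [derived, comm, Subgroup.closure_le]
  rintro _ ⟨g, -, k, hk, rfl⟩
  have hmem : g⁻¹ * k ∈ S.derived := Subgroup.subset_closure ⟨g, trivial, k, hk, rfl⟩
  by_contra hV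
  have hkerV (X : S.parts) (hker : ¬S.derived ≤ charKer (S.superchar X)) :
      S.superchar X (g⁻¹ * k) = 0 :=
    not_not.1 fun hne => hV (Subgroup.subset_closure ⟨_, ⟨⟨X, X.2, rfl⟩, hker⟩, hne⟩)
  have hkerG (X : S.parts) (hker : S.derived ≤ charKer (S.superchar X)) :
      S.superchar X (g⁻¹ * k) = S.superchar X 1 := by
    simpa using hker hmem 1
  have h1 : g⁻¹ * k = 1 := S.eq_one_of_forall_superchar_eq_zero_or_eq fun X =>
    (em _).elim (fun hker => .inr (hkerG X hker)) fun hker => .inl (hkerV X hker)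
  exact hV (by rw [h1]; exact S.VS.one_mem)

theorem comm_mono {H K : Subgroup G} (h : H ≤ K) : S.comm H ≤ S.comm K :=
  Subgroup.closure_mono fun _ ⟨g, hg, k, hk, hx⟩ => ⟨g, h hg, k, hk, hx⟩

theorem Vseq_le_gamma : ∀ n, S.Vseq n ≤ S.gamma n
  | 0 | 1 => le_top
  | n + 2 => S.comm_mono (Vseq_le_gamma (n + 1))

theorem gamma_succ_succ_le_Vseq_succ : ∀ n, S.gamma (n + 2) ≤ S.Vseq (n + 1)
  | 0 => S.derived_le_VS
  | n + 1 => S.comm_mono (gamma_succ_succ_le_Vseq_succ n)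

end SCT

/-- `G` is `S`-nilpotent (`γ_n(S) = 1` for some `n`) iff the series
`V_i(S)` terminates at the trivial subgroup. -/
theorem sNilpotent_iff_Vseq_eq_bot (S : SCT G) :
    (∃ n, S.gamma n = ⊥) ↔ ∃ n, S.Vseq n = ⊥ := by
  constructor
  · rintro ⟨n, hn⟩
    exact ⟨n, le_bot_iff.1 (hn ▸ S.Vseq_le_gamma n)⟩
  · rintro ⟨n, hn⟩
    obtain ⟨m, hm⟩ : ∃ m, S.Vseq (m + 1) = ⊥ := by
      rcases n with _ | m
      exacts [⟨0, hn⟩, ⟨m, hn⟩]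
    exact ⟨m + 2, le_bot_iff.1 (hm ▸ S.gamma_succ_succ_le_Vseq_succ m)⟩
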